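/- arXiv:0908.0555 — 7 statements merged into one kernel-verified Lean document; each statement's English description precedes it below -/
import Mathlib

section
/- Fix g ≥ 1, L ≥ 2. The map φ sending a matrix M = I_{2g} + L·A in Sp_{2g}(ℤ) congruent to the identity mod L to the reduction of A mod L is a well-defined group homomorphism from Sp_{2g}(ℤ, L) to the additive group sp_{2g}(ℤ/L), i.e. φ(MN) = φ(M) + φ(N), the image of φ lands in sp_{2g}(ℤ/L), and the kernel of φ is Sp_{2g}(ℤ, L²). -/
open Matrix

abbrev Idx (g : ℕ) := Fin g ⊕ Fin g

/-- The standard symplectic matrix `Ω_g = [[0, I_g], [-I_g, 0]]`. -/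
def Omega (g : ℕ) (R : Type*) [CommRing R] : Matrix (Idx g) (Idx g) R :=
  Matrix.fromBlocks 0 1 (-1) 0

/-- `X` is a symplectic matrix: `Xᵀ Ω X = Ω`. -/
def IsSymp (g : ℕ) (R : Type*) [CommRing R] (X : Matrix (Idx g) (Idx g) R) : Prop :=
  Xᵀ * Omega g R * X = Omega g R

/-- `M` is congruent to the identity mod `L`. -/
def IsLevel (g L : ℕ) (M : Matrix (Idx g) (Idx g) ℤ) : Prop :=
  M.map (Int.cast : ℤ → ZMod L) = 1

/-- For `M = I + L·A`, `phi g L M` is the reduction of `A` mod `L`. -/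
def phi (g L : ℕ) (M : Matrix (Idx g) (Idx g) ℤ) : Matrix (Idx g) (Idx g) (ZMod L) :=
  ((M - 1).map (fun x => x / (L : ℤ))).map (Int.cast : ℤ → ZMod L)

/-!
`M ≡ I (mod L)` means exactly `M = I + L•A` with `A` integral. Expanding,
`(I + L•A)(I + L•B) = I + L•(A + B + L•AB)` and
`(I + L•A)ᵀ Ω (I + L•A) = Ω + L•(AᵀΩ + ΩA + L•AᵀΩA)`: the terms quadratic in `A` carry an extra
factor `L`, so they vanish mod `L`. This makes `φ` additive, and, after cancelling the factor `L`
in `ℤ`, turns `MᵀΩM = Ω` into `AᵀΩ + ΩA ≡ 0 (mod L)`. The kernel is described by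
`L² ∣ L·a ↔ L ∣ a`.
-/

lemma one_add_smul_mul_one_add_smul {R A : Type*} [CommRing R] [Ring A] [Algebra R A]
    (ℓ : R) (a b : A) :
    (1 + ℓ • a) * (1 + ℓ • b) = 1 + ℓ • (a + b + ℓ • (a * b)) := by
  simp only [mul_add, add_mul, one_mul, mul_one, smul_add, smul_smul, smul_mul_assoc,
    mul_smul_comm]
  abel

lemma transpose_one_add_smul_mul_mul_one_add_smul {n R : Type*} [Fintype n] [DecidableEq n]
    [CommRing R] (ℓ : R) (Ω A : Matrix n n R) :
    (1 + ℓ • A)ᵀ * Ω * (1 + ℓ • A) = Ω + ℓ • (Aᵀ * Ω + Ω * A + ℓ • (Aᵀ * Ω * A)) := by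
  simp only [transpose_add, transpose_one, transpose_smul, mul_add, add_mul, one_mul, mul_one,
    smul_add, smul_smul, smul_mul_assoc, mul_smul_comm]
  abel

section ZModReduction

variable {m n : Type*} {L : ℕ}

lemma map_intCast_eq_zero_iff (X : Matrix m n ℤ) :
    X.map (Int.cast : ℤ → ZMod L) = 0 ↔ ∀ i j, (L : ℤ) ∣ X i j := by
  simp [← Matrix.ext_iff, ZMod.intCast_zmod_eq_zero_iff_dvd]

lemma map_intCast_natCast_smul (X : Matrix m n ℤ) :
    ((L : ℤ) • X).map (Int.cast : ℤ → ZMod L) = 0 :=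
  (map_intCast_eq_zero_iff _).2 fun i j => by simp

lemma map_intCast_mul {l R : Type*} [Fintype m] [Ring R] (X : Matrix l m ℤ) (Y : Matrix m n ℤ) :
    (X * Y).map (Int.cast : ℤ → R) = X.map Int.cast * Y.map Int.cast :=
  Matrix.map_mul (f := Int.castRingHom R)

end ZModReduction

section Symplectic

variable {g L : ℕ} {M N : Matrix (Idx g) (Idx g) ℤ}

lemma Omega_map_intCast :
    (Omega g ℤ).map (Int.cast : ℤ → ZMod L) = Omega g (ZMod L) := by
  rw [Omega, Omega, fromBlocks_map, Matrix.map_neg _ Int.cast_neg,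
    Matrix.map_zero _ Int.cast_zero, Matrix.map_one _ Int.cast_zero Int.cast_one]

lemma isLevel_iff_dvd : IsLevel g L M ↔ ∀ i j, (L : ℤ) ∣ (M - 1) i j := by
  rw [← map_intCast_eq_zero_iff, IsLevel, Matrix.map_sub _ Int.cast_sub,
    Matrix.map_one _ Int.cast_zero Int.cast_one, sub_eq_zero]

lemma isLevel_iff_exists_eq_one_add_smul :
    IsLevel g L M ↔ ∃ A, M = 1 + (L : ℤ) • A := by
  rw [isLevel_iff_dvd]
  constructor
  · intro h
    choose A hA using h
    exact ⟨Matrix.of A, by ext i j; simp [← hA]⟩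
  · rintro ⟨A, rfl⟩ i j
    simp only [add_sub_cancel_left, Matrix.smul_apply, smul_eq_mul, dvd_mul_right]

lemma phi_one_add_smul (hL : L ≠ 0) (A : Matrix (Idx g) (Idx g) ℤ) :
    phi g L (1 + (L : ℤ) • A) = A.map (Int.cast : ℤ → ZMod L) := by
  ext i j
  simp only [phi, map_apply, add_sub_cancel_left, Matrix.smul_apply, smul_eq_mul,
    Int.mul_ediv_cancel_left _ (Int.natCast_ne_zero.2 hL)]

lemma phi_mul (hL : L ≠ 0) (hM : IsLevel g L M) (hN : IsLevel g L N) :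
    phi g L (M * N) = phi g L M + phi g L N := by
  obtain ⟨A, rfl⟩ := isLevel_iff_exists_eq_one_add_smul.1 hM
  obtain ⟨B, rfl⟩ := isLevel_iff_exists_eq_one_add_smul.1 hN
  rw [one_add_smul_mul_one_add_smul, phi_one_add_smul hL, phi_one_add_smul hL,
    phi_one_add_smul hL, Matrix.map_add _ Int.cast_add, Matrix.map_add _ Int.cast_add,
    map_intCast_natCast_smul, add_zero]

lemma phi_transpose_mul_Omega_add_Omega_mul (hL : L ≠ 0) (hS : IsSymp g ℤ M)
    (hM : IsLevel g L M) :
    (phi g L M)ᵀ * Omega g (ZMod L) + Omega g (ZMod L) * phi g L M = 0 := by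
  obtain ⟨A, rfl⟩ := isLevel_iff_exists_eq_one_add_smul.1 hM
  rw [IsSymp, transpose_one_add_smul_mul_mul_one_add_smul, add_eq_left,
    smul_eq_zero_iff_right (Int.natCast_ne_zero.2 hL)] at hS
  have hLie : (Aᵀ * Omega g ℤ + Omega g ℤ * A).map (Int.cast : ℤ → ZMod L) = 0 := by
    rw [eq_neg_of_add_eq_zero_left hS, Matrix.map_neg _ Int.cast_neg, map_intCast_natCast_smul,
      neg_zero]
  rwa [Matrix.map_add _ Int.cast_add, map_intCast_mul, map_intCast_mul, transpose_map,
    Omega_map_intCast, ← phi_one_add_smul hL] at hLie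

lemma phi_eq_zero_iff (hL : L ≠ 0) (hM : IsLevel g L M) :
    phi g L M = 0 ↔ IsLevel g (L ^ 2) M := by
  obtain ⟨A, rfl⟩ := isLevel_iff_exists_eq_one_add_smul.1 hM
  rw [phi_one_add_smul hL, map_intCast_eq_zero_iff, isLevel_iff_dvd]
  simp only [add_sub_cancel_left, Matrix.smul_apply, smul_eq_mul, pow_two, Nat.cast_mul,
    mul_dvd_mul_iff_left (Int.natCast_ne_zero.2 hL)]

end Symplectic

theorem phi_hom_into_sp_general (g L : ℕ) (hL : 2 ≤ L) :
    -- well-definedness: `φ (I + L·A) = A mod L`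
    (∀ (M A : Matrix (Idx g) (Idx g) ℤ), M = 1 + (L : ℤ) • A →
      phi g L M = A.map (Int.cast : ℤ → ZMod L)) ∧
    -- `φ` is a homomorphism: `φ(MN) = φ(M) + φ(N)`
    (∀ M N : Matrix (Idx g) (Idx g) ℤ, IsSymp g ℤ M → IsSymp g ℤ N →
      IsLevel g L M → IsLevel g L N → phi g L (M * N) = phi g L M + phi g L N) ∧
    -- the image lands in `sp_{2g}(ℤ/L)`
    (∀ M : Matrix (Idx g) (Idx g) ℤ, IsSymp g ℤ M → IsLevel g L M →
      (phi g L M)ᵀ * Omega g (ZMod L) + Omega g (ZMod L) * phi g L M = 0) ∧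
    -- the kernel of `φ` is `Sp_{2g}(ℤ, L²)`
    (∀ M : Matrix (Idx g) (Idx g) ℤ, IsSymp g ℤ M → IsLevel g L M →
      (phi g L M = 0 ↔ IsLevel g (L ^ 2) M)) := by
  have hL0 : L ≠ 0 := by omega
  exact ⟨fun _ A h => h ▸ phi_one_add_smul hL0 A,
    fun _ _ _ _ hM hN => phi_mul hL0 hM hN,
    fun _ hS hM => phi_transpose_mul_Omega_add_Omega_mul hL0 hS hM,
    fun _ _ hM => phi_eq_zero_iff hL0 hM⟩

/-- The map `φ : Sp_{2g}(ℤ, L) → sp_{2g}(ℤ/L)`, `I + L·A ↦ A mod L`, is a well-defined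
group homomorphism whose image lands in the symplectic Lie algebra and whose kernel is
`Sp_{2g}(ℤ, L²)`. -/
theorem phi_hom_into_sp (g L : ℕ) (hg : 1 ≤ g) (hL : 2 ≤ L) :
    -- well-definedness: `φ (I + L·A) = A mod L`
    (∀ (M A : Matrix (Idx g) (Idx g) ℤ), M = 1 + (L : ℤ) • A →
      phi g L M = A.map (Int.cast : ℤ → ZMod L)) ∧
    -- `φ` is a homomorphism: `φ(MN) = φ(M) + φ(N)`
    (∀ M N : Matrix (Idx g) (Idx g) ℤ, IsSymp g ℤ M → IsSymp g ℤ N →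
      IsLevel g L M → IsLevel g L N → phi g L (M * N) = phi g L M + phi g L N) ∧
    -- the image lands in `sp_{2g}(ℤ/L)`
    (∀ M : Matrix (Idx g) (Idx g) ℤ, IsSymp g ℤ M → IsLevel g L M →
      (phi g L M)ᵀ * Omega g (ZMod L) + Omega g (ZMod L) * phi g L M = 0) ∧
    -- the kernel of `φ` is `Sp_{2g}(ℤ, L²)`
    (∀ M : Matrix (Idx g) (Idx g) ℤ, IsSymp g ℤ M → IsLevel g L M →
      (phi g L M = 0 ↔ IsLevel g (L ^ 2) M)) :=
  phi_hom_into_sp_general g L hL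
end

section
/- Fix g ≥ 1, a prime p, and k ≥ 1 with (p, k) ∉ {(2,1), (3,1)}. Then the short exact sequence 1 → sp_{2g}(ℤ/p) → Sp_{2g}(ℤ/p^{k+1}) → Sp_{2g}(ℤ/p^k) → 1 (induced by reduction mod p^k) does not split; i.e. there is no group homomorphism φ: Sp_{2g}(ℤ/p^k) → Sp_{2g}(ℤ/p^{k+1}) such that the composition with the reduction map Sp_{2g}(ℤ/p^{k+1}) → Sp_{2g}(ℤ/p^k) is the identity. -/
open Matrix

/-- The symplectic group `Sp_{2g}(R)` as a submonoid of the `2g × 2g` matrices (every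
element is in fact invertible). -/
def Sp (g : ℕ) (R : Type*) [CommRing R] : Submonoid (Matrix (Idx g) (Idx g) R) where
  carrier := {X | Xᵀ * Omega g R * X = Omega g R}
  one_mem' := by simp
  mul_mem' := by
    intro a b ha hb
    simp only [Set.mem_setOf_eq] at *
    rw [Matrix.transpose_mul]
    have h1 : bᵀ * aᵀ * Omega g R * (a * b) = bᵀ * (aᵀ * Omega g R * a) * b := by
      simp only [Matrix.mul_assoc]
    rw [h1, ha, hb]

/-! The transvection `t = 1 + E_{i,g+i}` is symplectic and `t ^ p ^ k = 1` over `ℤ/p^k`. A lift of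
`t` to `ℤ/p^(k+1)` has the form `1 + M` with `M = E + p^k B`; since `p^(2k) = 0` there, `M ^ 2` is
divisible by `p^k` and `M ^ 4 = 0`. In the binomial expansion of `(1 + M) ^ p ^ k` the terms of
degree `2 ≤ m < p^k` vanish because `p ∣ (p^k).choose m`, and `M ^ p ^ k = 0` as soon as
`p ^ k ≥ 4`, which is exactly what excludes `(p, k) = (2, 1), (3, 1)`. Hence the lift has
`p^k`-th power `1 + p^k E ≠ 1`, so no homomorphism can send `t` to a lift of it. -/

theorem Nat.Prime.pow_succ_dvd_choose_mul_pow {p k m : ℕ} (hp : p.Prime) (hm₀ : m ≠ 0)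
    (hm : m ≠ p ^ k) : p ^ (k + 1) ∣ (p ^ k).choose m * p ^ k := by
  rw [pow_succ']
  exact mul_dvd_mul_right (hp.dvd_choose_pow hm₀ hm) _

theorem Nat.Prime.four_le_pow {p k : ℕ} (hp : p.Prime) (hk : 1 ≤ k) (h2 : ¬(p = 2 ∧ k = 1))
    (h3 : ¬(p = 3 ∧ k = 1)) : 4 ≤ p ^ k := by
  obtain rfl | hk2 : k = 1 ∨ 2 ≤ k := by omega
  · have h4 : p ≠ 4 := by rintro rfl; norm_num at hp
    have := hp.two_le
    simp only [and_true] at h2 h3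
    rw [pow_one]
    omega
  · calc 4 = 2 ^ 2 := rfl
      _ ≤ p ^ 2 := Nat.pow_le_pow_left hp.two_le 2
      _ ≤ p ^ k := Nat.pow_le_pow_right hp.pos hk2

section PrimePowerCharacteristic

variable {A : Type*} [Ring A] {p k : ℕ}

theorem nsmul_eq_zero_of_natCast_eq_zero_of_dvd {N n : ℕ} (hN : (N : A) = 0) (hn : N ∣ n)
    (x : A) : n • x = 0 := by
  obtain ⟨d, rfl⟩ := hn
  rw [nsmul_eq_mul, Nat.cast_mul, hN, zero_mul, zero_mul]

theorem one_add_pow_prime_pow (hp : p.Prime) (hA : ((p ^ (k + 1) : ℕ) : A) = 0) {M Q : A}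
    (hMQ : M ^ 2 = p ^ k • Q) (hM : M ^ p ^ k = 0) :
    (1 + M) ^ p ^ k = 1 + p ^ k • M := by
  have hn : p ^ k + 1 = (p ^ k - 1) + 1 + 1 := by
    have := Nat.one_le_pow k p hp.pos; omega
  have htail : ∀ m ∈ Finset.range (p ^ k - 1),
      M ^ (m + 2) * 1 ^ (p ^ k - (m + 2)) * ((p ^ k).choose (m + 2) : A) = 0 := by
    intro m hm
    rw [one_pow, mul_one, ← nsmul_eq_mul']
    rcases eq_or_ne (m + 2) (p ^ k) with hmk | hmk
    · rw [hmk, hM, smul_zero]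
    · rw [pow_add, hMQ, mul_smul_comm, smul_smul]
      exact nsmul_eq_zero_of_natCast_eq_zero_of_dvd hA
        (hp.pow_succ_dvd_choose_mul_pow (by omega) hmk) _
  rw [add_comm, (Commute.one_right M).add_pow, hn, Finset.sum_range_succ', Finset.sum_range_succ',
    Finset.sum_eq_zero htail, nsmul_eq_mul']
  simp [add_comm]

theorem one_add_add_nsmul_pow_prime_pow (hp : p.Prime) (hA : ((p ^ (k + 1) : ℕ) : A) = 0)
    (hk : 4 ≤ p ^ k) {E : A} (hE : E * E = 0) (B : A) :
    (1 + E + p ^ k • B) ^ p ^ k = 1 + p ^ k • E := by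
  have hcc : ∀ x : A, (p ^ k * p ^ k) • x = 0 := by
    have hk1 : k ≠ 0 := by rintro rfl; simp at hk
    refine nsmul_eq_zero_of_natCast_eq_zero_of_dvd hA ?_
    rw [← pow_add]
    exact pow_dvd_pow p (by omega)
  have hM2 : (E + p ^ k • B) ^ 2 = p ^ k • (E * B + B * E) := by
    simp only [sq, mul_add, add_mul, mul_smul_comm, smul_mul_assoc, smul_smul, hE, hcc, smul_add]
    abel
  have hM4 : (E + p ^ k • B) ^ 4 = 0 := by
    rw [show 4 = 2 * 2 from rfl, pow_mul, hM2, sq, mul_smul_comm, smul_mul_assoc, smul_smul, hcc]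
  rw [add_assoc, one_add_pow_prime_pow hp hA hM2 (pow_eq_zero_of_le hk hM4), smul_add, smul_smul,
    hcc, add_zero]

end PrimePowerCharacteristic

theorem ZMod.exists_eq_mul_of_castHom_eq_zero {m n : ℕ} (h : m ∣ n) {x : ZMod n}
    (hx : ZMod.castHom h (ZMod m) x = 0) : ∃ y, x = m * y := by
  obtain ⟨a, rfl⟩ := ZMod.intCast_surjective x
  rw [map_intCast, ZMod.intCast_zmod_eq_zero_iff_dvd] at hx
  obtain ⟨d, rfl⟩ := hx
  exact ⟨d, by push_cast; rfl⟩

theorem Matrix.exists_eq_add_smul_of_map_castHom_eq {ι κ : Type*} {m n : ℕ} (h : m ∣ n)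
    {Y Z : Matrix ι κ (ZMod n)}
    (hYZ : Y.map (ZMod.castHom h (ZMod m)) = Z.map (ZMod.castHom h (ZMod m))) :
    ∃ B, Y = Z + (m : ZMod n) • B := by
  choose B hB using fun i j ↦ ZMod.exists_eq_mul_of_castHom_eq_zero h (x := Y i j - Z i j)
    (by rw [map_sub, sub_eq_zero]; exact congrFun (congrFun hYZ i) j)
  exact ⟨Matrix.of B, by ext i j; simp [← hB]⟩

namespace Matrix

variable {n : Type*} [DecidableEq n]

theorem natCast_zmod_self [Fintype n] (N : ℕ) : (N : Matrix n n (ZMod N)) = 0 := by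
  rw [← diagonal_natCast, ZMod.natCast_self, diagonal_zero]

section Transvection

variable {R : Type*} [CommRing R] {i j : n}

theorem transvection_map {S : Type*} [CommRing S] (f : R →+* S) (c : R) :
    (transvection i j c).map f = transvection i j (f c) := by
  rw [transvection, transvection, Matrix.map_add _ (map_add f),
    Matrix.map_one f (map_zero f) (map_one f), map_single]

theorem transvection_pow [Fintype n] (h : i ≠ j) (c : R) (m : ℕ) :
    transvection i j c ^ m = transvection i j (m * c) := by
  induction m with
  | zero => simp [transvection_zero]
  | succ m ih => rw [pow_succ, ih, transvection_mul_transvection_same _ _ h]; push_cast; ring_nf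

theorem transvection_eq_one_iff (h : i ≠ j) {c : R} : transvection i j c = 1 ↔ c = 0 := by
  refine ⟨fun hc ↦ ?_, fun hc ↦ hc ▸ transvection_zero i j⟩
  simpa [transvection, one_apply_ne h] using congrFun (congrFun hc i) j

theorem pow_prime_pow_of_map_castHom_eq_transvection [Fintype n] {p k : ℕ} (hp : p.Prime)
    (hk : 4 ≤ p ^ k) (h : i ≠ j) {Y : Matrix n n (ZMod (p ^ (k + 1)))}
    (hY : Y.map (ZMod.castHom (pow_dvd_pow p k.le_succ) (ZMod (p ^ k))) = transvection i j 1) :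
    Y ^ p ^ k = transvection i j ((p ^ k : ℕ) : ZMod (p ^ (k + 1))) := by
  obtain ⟨B, rfl⟩ := exists_eq_add_smul_of_map_castHom_eq (Z := transvection i j 1) _
    (by rw [hY, transvection_map, map_one])
  have hE : single i j (1 : ZMod (p ^ (k + 1))) * single i j 1 = 0 :=
    single_mul_single_of_ne (h := h.symm) ..
  rw [Nat.cast_smul_eq_nsmul, transvection, transvection,
    one_add_add_nsmul_pow_prime_pow hp (natCast_zmod_self _) hk hE, smul_single, nsmul_eq_mul,
    mul_one]

end Transvection

end Matrix

section Symplectic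

variable {g : ℕ} {R : Type*} [CommRing R]

theorem fromBlocks_one_zero_one_mem_Sp {B : Matrix (Fin g) (Fin g) R} (hB : B.IsSymm) :
    fromBlocks 1 B 0 1 ∈ Sp g R := by
  show (fromBlocks 1 B 0 1)ᵀ * Omega g R * fromBlocks 1 B 0 1 = Omega g R
  simp [Omega, fromBlocks_transpose, fromBlocks_multiply, hB.eq]

theorem transvection_inl_inr_eq_fromBlocks (i j : Fin g) (c : R) :
    transvection (Sum.inl i : Idx g) (Sum.inr j) c = fromBlocks 1 (single i j c) 0 1 := by
  ext (x | x) (y | y) <;> simp [transvection, Matrix.one_apply, single, fromBlocks]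

theorem transvection_inl_inr_mem_Sp (i : Fin g) (c : R) :
    transvection (Sum.inl i : Idx g) (Sum.inr i) c ∈ Sp g R := by
  rw [transvection_inl_inr_eq_fromBlocks]
  exact fromBlocks_one_zero_one_mem_Sp (transpose_single i i c)

end Symplectic

/-- For `(p, k) ∉ {(2,1), (3,1)}`, the extension
`1 → sp_{2g}(ℤ/p) → Sp_{2g}(ℤ/p^{k+1}) → Sp_{2g}(ℤ/p^k) → 1` does not split: there is no
group homomorphism `Sp_{2g}(ℤ/p^k) → Sp_{2g}(ℤ/p^{k+1})` splitting the reduction map. -/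
theorem sp_reduction_not_split (g p k : ℕ) (hg : 1 ≤ g) (hp : p.Prime) (hk : 1 ≤ k)
    (h2 : ¬(p = 2 ∧ k = 1)) (h3 : ¬(p = 3 ∧ k = 1)) :
    ¬ ∃ φ : Sp g (ZMod (p ^ k)) →* Sp g (ZMod (p ^ (k + 1))),
      ∀ X : Sp g (ZMod (p ^ k)),
        ((φ X : Matrix (Idx g) (Idx g) (ZMod (p ^ (k + 1))))).map
            (ZMod.castHom (pow_dvd_pow p k.le_succ) (ZMod (p ^ k))) =
          (X : Matrix (Idx g) (Idx g) (ZMod (p ^ k))) := by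
  rintro ⟨φ, hφ⟩
  have hij : (.inl ⟨0, hg⟩ : Idx g) ≠ .inr ⟨0, hg⟩ := Sum.inl_ne_inr
  let X : Sp g (ZMod (p ^ k)) := ⟨transvection _ _ 1, transvection_inl_inr_mem_Sp ⟨0, hg⟩ 1⟩
  have hX : X ^ p ^ k = 1 := Subtype.ext <| by simp [X, transvection_pow hij]
  have hY := pow_prime_pow_of_map_castHom_eq_transvection hp (hp.four_le_pow hk h2 h3) hij (hφ X)
  rw [← SubmonoidClass.coe_pow, ← map_pow, hX, map_one, OneMemClass.coe_one, eq_comm,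
    transvection_eq_one_iff hij, ZMod.natCast_eq_zero_iff,
    Nat.pow_dvd_pow_iff_le_right hp.one_lt] at hY
  omega
end

section
/- Fix g ≥ 1, a prime p, and k ≥ 1 with p^k ≥ 4. Let E be the 2g×2g matrix over ℤ/p^{k+1} with a 1 at position (1, g+1) and zeros elsewhere, and let A be any 2g×2g matrix over ℤ/p^{k+1}. Then (I + E + p^k·A)^{p^k} = I + p^k·E ≠ I. In particular, I + E + p^k·A has order strictly greater than p^k in the multiplicative monoid of matrices. -/
open Matrix

/-!
Since `E² = 0` and `c := p^k` satisfies `c² = 0`, expanding `(1 + E + c•A)^n` leaves only the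
terms with at most one factor `c•A`, which gives
`1 + n•E + c•(n•A + C(n,2)•(EA + AE) + C(n,3)•EAE)`.
For `n = p^k ≥ 4` the prime `p` divides `C(p^k, 2)` and `C(p^k, 3)`, and `p^k` itself, so all
terms multiplied by `c` vanish and the power is `1 + p^k•E`. That matrix is `≠ 1` because
`p^k ≠ 0` in `ℤ/p^{k+1}`, while its `p`-th power is `1`; hence the order is exactly `p^{k+1}`.
-/

theorem one_add_pow_of_mul_self_eq_zero {S : Type*} [Ring S] {N : S} (hN : N * N = 0) (n : ℕ) :
    (1 + N) ^ n = 1 + n • N := by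
  induction n with
  | zero => simp
  | succ n ih =>
    rw [pow_succ, ih, add_mul, one_mul, smul_mul_assoc, mul_add, mul_one, hN, add_zero, succ_nsmul]
    abel

theorem orderOf_eq_prime_pow_of_pow_eq_one_add {M : Type*} [Ring M] {p : ℕ} [Fact p.Prime]
    {x N : M} {k : ℕ} (hx : x ^ p ^ k = 1 + N) (hN : N * N = 0) (hpN : p • N = 0)
    (hN0 : N ≠ 0) : orderOf x = p ^ (k + 1) := by
  have hx_succ : (x ^ p ^ k) ^ p = 1 := by
    rw [hx, one_add_pow_of_mul_self_eq_zero hN, hpN, add_zero]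
  rw [← pow_mul, ← pow_succ] at hx_succ
  exact orderOf_eq_prime_pow (by simpa [hx] using hN0) hx_succ

section SquareZeroPerturbation

variable {R S : Type*} [CommRing R] [Ring S] [Algebra R S] {E : S} {c : R}

theorem one_add_add_smul_pow (hE : E * E = 0) (hc : c * c = 0) (A : S) (n : ℕ) :
    (1 + E + c • A) ^ n = 1 + n • E +
      c • (n • A + n.choose 2 • (E * A + A * E) + n.choose 3 • (E * A * E)) := by
  induction n with
  | zero => simp
  | succ n ih =>
    rw [pow_succ, ih, Nat.choose_succ_succ', Nat.choose_succ_succ', Nat.choose_one_right]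
    simp only [mul_add, add_mul, one_mul, mul_one, smul_mul_assoc, mul_smul_comm, smul_smul, hc,
      zero_smul, mul_assoc, hE, mul_zero, smul_zero, add_zero, smul_add, add_smul, succ_nsmul]
    abel

theorem one_add_add_smul_pow_of_natCast_mul_eq_zero (hE : E * E = 0) (hc : c * c = 0)
    (A : S) {n : ℕ} (h1 : (n : R) * c = 0) (h2 : (n.choose 2 : R) * c = 0)
    (h3 : (n.choose 3 : R) * c = 0) : (1 + E + c • A) ^ n = 1 + n • E := by
  simp only [one_add_add_smul_pow hE hc, smul_add, ← Nat.cast_smul_eq_nsmul R, smul_smul,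
    mul_comm c, h1, h2, h3, zero_smul, add_zero]

end SquareZeroPerturbation

theorem ZMod.natCast_mul_natCast_pow_eq_zero {p m : ℕ} (k : ℕ) (h : p ∣ m) :
    (m : ZMod (p ^ (k + 1))) * ((p ^ k : ℕ) : ZMod (p ^ (k + 1))) = 0 := by
  rw [← Nat.cast_mul, ZMod.natCast_eq_zero_iff, pow_succ']
  exact mul_dvd_mul_right h _

theorem ZMod.natCast_pow_ne_zero {p : ℕ} (hp : 1 < p) (k : ℕ) :
    ((p ^ k : ℕ) : ZMod (p ^ (k + 1))) ≠ 0 := by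
  rw [Ne, ZMod.natCast_eq_zero_iff, Nat.pow_dvd_pow_iff_le_right hp]
  omega

/-- With `E` the matrix having a single `1` at position `(1, g+1)` over `ℤ/p^{k+1}` and
`p^k ≥ 4`, for any matrix `A` we have `(I + E + p^k·A)^{p^k} = I + p^k·E ≠ I`; in particular
`I + E + p^k·A` has multiplicative order strictly greater than `p^k`. -/
theorem pow_one_add_elementary_add (g p k : ℕ) (hg : 0 < g) (hp : p.Prime) (hk : 1 ≤ k)
    (hpk : 4 ≤ p ^ k) (A : Matrix (Idx g) (Idx g) (ZMod (p ^ (k + 1)))) :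
    letI R := ZMod (p ^ (k + 1))
    letI E : Matrix (Idx g) (Idx g) R :=
      Matrix.single (Sum.inl ⟨0, hg⟩) (Sum.inr ⟨0, hg⟩) 1
    (1 + E + ((p ^ k : ℕ) : R) • A) ^ (p ^ k) = 1 + ((p ^ k : ℕ) : R) • E ∧
    1 + ((p ^ k : ℕ) : R) • E ≠ 1 ∧
    p ^ k < orderOf (1 + E + ((p ^ k : ℕ) : R) • A) := by
  set E : Matrix (Idx g) (Idx g) (ZMod (p ^ (k + 1))) :=
    single (.inl ⟨0, hg⟩) (.inr ⟨0, hg⟩) 1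
  set c : ZMod (p ^ (k + 1)) := ((p ^ k : ℕ) : ZMod (p ^ (k + 1)))
  have hE : E * E = 0 := by simp [E]
  have hc : c * c = 0 := ZMod.natCast_mul_natCast_pow_eq_zero k (dvd_pow_self p (by omega))
  have hchoose {j : ℕ} (hj0 : j ≠ 0) (hj : j < 4) :
      ((p ^ k).choose j : ZMod (p ^ (k + 1))) * c = 0 :=
    ZMod.natCast_mul_natCast_pow_eq_zero k (hp.dvd_choose_pow hj0 (by omega))
  have hpow : (1 + E + c • A) ^ p ^ k = 1 + c • E := by
    rw [one_add_add_smul_pow_of_natCast_mul_eq_zero hE hc A hc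
      (hchoose two_ne_zero (by norm_num)) (hchoose three_ne_zero (by norm_num)),
      Nat.cast_smul_eq_nsmul]
  have hcE : c • E ≠ 0 := by
    intro h
    have h_entry := congr_fun₂ h (.inl ⟨0, hg⟩) (.inr ⟨0, hg⟩)
    simp only [E, Matrix.smul_apply, single_apply_same, smul_eq_mul, mul_one,
      Matrix.zero_apply] at h_entry
    exact ZMod.natCast_pow_ne_zero hp.one_lt k h_entry
  have hcE_sq : c • E * c • E = 0 := by rw [smul_mul_smul, hc, zero_smul]
  have hcE_p : p • c • E = 0 := by
    rw [← Nat.cast_smul_eq_nsmul (ZMod (p ^ (k + 1))), smul_smul,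
      ZMod.natCast_mul_natCast_pow_eq_zero k dvd_rfl, zero_smul]
  have := Fact.mk hp
  refine ⟨hpow, by simpa using hcE, ?_⟩
  rw [orderOf_eq_prime_pow_of_pow_eq_one_add hpow hcE_sq hcE_p hcE]
  exact Nat.pow_lt_pow_right hp.one_lt k.lt_succ_self
end

section
/- Let G be a group, let G = G₁ × G₂ be a direct product decomposition, and let M be a G-module on which the factor G₂ acts trivially. If H₁(G₂; ℤ) = 0 (i.e., G₂ is perfect), then the projection G → G₁ induces isomorphisms H₁(G; M) ≅ H₁(G₁; M) and H¹(G; M) ≅ H¹(G₁; M). -/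
/-! First group homology and cohomology, defined via the bar resolution. -/

section Defs

variable (G : Type*) [Group G] (M : Type*) [AddCommGroup M] [DistribMulAction G M]

/-- The boundary map `d₁ : ℤ[G] ⊗ M → M`, `[g] ⊗ m ↦ g⁻¹ • m − m`. -/
noncomputable def barD1 : (G →₀ M) →+ M :=
  Finsupp.liftAddHom fun g => DistribMulAction.toAddMonoidHom M g⁻¹ - AddMonoidHom.id M

/-- The boundary map `d₂`, `[g|h] ⊗ m ↦ [h] ⊗ (g⁻¹ • m) − [g h] ⊗ m + [g] ⊗ m`. -/
noncomputable def barD2 : ((G × G) →₀ M) →+ (G →₀ M) :=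
  Finsupp.liftAddHom fun p =>
    (Finsupp.singleAddHom p.2).comp (DistribMulAction.toAddMonoidHom M p.1⁻¹)
      - Finsupp.singleAddHom (p.1 * p.2) + Finsupp.singleAddHom p.1

/-- First group homology `H₁(G; M) = ker d₁ / im d₂`. -/
noncomputable def GroupH1 :=
  (barD1 G M).ker ⧸ ((barD2 G M).range.addSubgroupOf (barD1 G M).ker)

noncomputable instance : AddCommGroup (GroupH1 G M) :=
  QuotientAddGroup.Quotient.addCommGroup _

/-- The group of 1-cocycles (crossed homomorphisms) `f : G → M`,
`f (g h) = f g + g • f h`. -/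
def cocycles1 : AddSubgroup (G → M) where
  carrier := {f | ∀ g h : G, f (g * h) = f g + g • f h}
  zero_mem' := by intro g h; simp
  add_mem' := by
    intro f₁ f₂ h₁ h₂ g h
    simp only [Pi.add_apply, h₁ g h, h₂ g h, smul_add]
    abel
  neg_mem' := by
    intro f hf g h
    simp only [Pi.neg_apply, hf g h, smul_neg]
    abel

/-- The group of 1-coboundaries: `f g = g • m − m` for some `m`. -/
def coboundaries1 : AddSubgroup (G → M) where
  carrier := {f | ∃ m : M, ∀ g : G, f g = g • m - m}
  zero_mem' := ⟨0, by simp⟩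
  add_mem' := by
    rintro f₁ f₂ ⟨m₁, h₁⟩ ⟨m₂, h₂⟩
    exact ⟨m₁ + m₂, fun g => by simp only [Pi.add_apply, h₁ g, h₂ g, smul_add]; abel⟩
  neg_mem' := by
    rintro f ⟨m, hm⟩
    exact ⟨-m, fun g => by simp only [Pi.neg_apply, hm g, smul_neg]; abel⟩

/-- First group cohomology `H¹(G; M)`: crossed homomorphisms modulo principal ones. -/
def GroupCoh1 := (cocycles1 G M) ⧸ ((coboundaries1 G M).addSubgroupOf (cocycles1 G M))

noncomputable instance : AddCommGroup (GroupCoh1 G M) :=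
  QuotientAddGroup.Quotient.addCommGroup _

end Defs

/-! The inclusion `G₁ → G₁ × G₂` and the projection `G₁ × G₂ → G₁` are compatible with the
actions on `M`, so they induce maps between the bar complexes (push-forward of chains,
pull-back of cochains) which descend to `H₁` and `H¹`. Since `fst ∘ inl = id`, one composite is
the identity on the nose. For the other, triviality of the `G₂`-action makes
`b ↦ [(1, b)] ⊗ m` (modulo boundaries) and `b ↦ f (1, b)` (for a cocycle `f`) homomorphisms from
`G₂` to abelian groups, so they vanish as `G₂` is perfect; hence `[(a, b)] ⊗ m ≡ [(a, 1)] ⊗ m`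
and `f (a, b) = f (a, 1)`. -/

section QuotientAddSubgroupOf

variable {X X' : Type*} [AddCommGroup X] [AddCommGroup X']
  {S T : AddSubgroup X} {S' T' : AddSubgroup X'}

noncomputable def quotientAddSubgroupOfMap (f : X →+ X') (hS : S ≤ S'.comap f)
    (hT : T ≤ T'.comap f) : S ⧸ T.addSubgroupOf S →+ S' ⧸ T'.addSubgroupOf S' :=
  QuotientAddGroup.map _ _ ((f.comp S.subtype).codRestrict S' fun x => hS x.2)
    fun _ hx => hT hx

theorem quotientAddSubgroupOfMap_comp_eq_id (f : X →+ X') (g : X' →+ X)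
    (hfS : S ≤ S'.comap f) (hfT : T ≤ T'.comap f) (hgS : S' ≤ S.comap g) (hgT : T' ≤ T.comap g)
    (hgf : ∀ x ∈ S, x - g (f x) ∈ T) :
    (quotientAddSubgroupOfMap g hgS hgT).comp (quotientAddSubgroupOfMap f hfS hfT) =
      AddMonoidHom.id _ := by
  refine QuotientAddGroup.addMonoidHom_ext _ (AddMonoidHom.ext fun x => ?_)
  change ((⟨g (f x), _⟩ : S) : S ⧸ T.addSubgroupOf S) = x
  rw [eq_comm, QuotientAddGroup.eq_iff_sub_mem, AddSubgroup.mem_addSubgroupOf]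
  exact hgf x x.2

theorem nonempty_addEquiv_quotient_addSubgroupOf (f : X →+ X') (g : X' →+ X)
    (hfS : S ≤ S'.comap f) (hfT : T ≤ T'.comap f) (hgS : S' ≤ S.comap g) (hgT : T' ≤ T.comap g)
    (hgf : ∀ x ∈ S, x - g (f x) ∈ T) (hfg : ∀ x ∈ S', x - f (g x) ∈ T') :
    Nonempty (S ⧸ T.addSubgroupOf S ≃+ S' ⧸ T'.addSubgroupOf S') :=
  ⟨AddMonoidHom.toAddEquiv _ _
    (quotientAddSubgroupOfMap_comp_eq_id f g hfS hfT hgS hgT hgf)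
    (quotientAddSubgroupOfMap_comp_eq_id g f hgS hgT hfS hfT hfg)⟩

end QuotientAddSubgroupOf

theorem eq_zero_of_commutator_eq_top {G A : Type*} [Group G] [AddCommGroup A]
    (hG : commutator G = ⊤) (f : G → A) (hf : ∀ c d, f (c * d) = f c + f d) (g : G) :
    f g = 0 := by
  let φ : G →* Multiplicative A := MonoidHom.mk' (fun g => .ofAdd (f g)) fun c d => by
    simp [hf]
  exact congrArg Multiplicative.toAdd <|
    (hG ▸ Abelianization.commutator_subset_ker φ : ⊤ ≤ φ.ker) (Subgroup.mem_top g)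

section Functoriality

variable {G H M : Type*} [Group G] [Group H] [AddCommGroup M]
  [DistribMulAction G M] [DistribMulAction H M]

theorem barD1_single (g : G) (m : M) : barD1 G M (Finsupp.single g m) = g⁻¹ • m - m := by
  simp [barD1]

theorem barD2_single (g h : G) (m : M) :
    barD2 G M (Finsupp.single (g, h) m) =
      Finsupp.single h (g⁻¹ • m) - Finsupp.single (g * h) m + Finsupp.single g m := by
  simp [barD2]

variable (φ : G →* H) (hφ : ∀ g (m : M), φ g • m = g • m)
include hφ

theorem ker_barD1_le_comap_mapDomain :
    (barD1 G M).ker ≤ (barD1 H M).ker.comap (Finsupp.mapDomain.addMonoidHom φ) := by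
  have h : (barD1 H M).comp (Finsupp.mapDomain.addMonoidHom φ) = barD1 G M :=
    Finsupp.addHom_ext fun g m => by simp [barD1_single, ← map_inv, hφ]
  intro x hx
  rw [AddSubgroup.mem_comap, AddMonoidHom.mem_ker, ← AddMonoidHom.comp_apply, h]
  exact hx

theorem range_barD2_le_comap_mapDomain :
    (barD2 G M).range ≤ (barD2 H M).range.comap (Finsupp.mapDomain.addMonoidHom φ) := by
  have h : (Finsupp.mapDomain.addMonoidHom φ).comp (barD2 G M) =
      (barD2 H M).comp (Finsupp.mapDomain.addMonoidHom (Prod.map φ φ)) :=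
    Finsupp.addHom_ext fun ⟨g, h⟩ m => by
      simp [barD2_single, Finsupp.mapDomain_sub, Finsupp.mapDomain_add, ← map_inv, hφ]
  rintro _ ⟨y, rfl⟩
  exact ⟨_, (DFunLike.congr_fun h y).symm⟩

theorem cocycles1_le_comap_funLeft :
    cocycles1 H M ≤ (cocycles1 G M).comap (LinearMap.funLeft ℤ M φ).toAddMonoidHom := by
  intro u hu g g'
  simp [hu (φ g) (φ g'), hφ]

theorem coboundaries1_le_comap_funLeft :
    coboundaries1 H M ≤ (coboundaries1 G M).comap (LinearMap.funLeft ℤ M φ).toAddMonoidHom := by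
  rintro u ⟨m, hm⟩
  exact ⟨m, fun g => by simp [hm, hφ]⟩

end Functoriality

section Product

variable {G₁ G₂ M : Type*} [Group G₁] [Group G₂] [AddCommGroup M]
  [DistribMulAction (G₁ × G₂) M]

theorem mk_smul_eq_smul [DistribMulAction G₁ M]
    (hcompat : ∀ (a : G₁) (m : M), ((a, 1) : G₁ × G₂) • m = a • m)
    (htriv : ∀ (b : G₂) (m : M), ((1, b) : G₁ × G₂) • m = m) (a : G₁) (b : G₂) (m : M) :
    ((a, b) : G₁ × G₂) • m = a • m := by
  rw [show ((a, b) : G₁ × G₂) = (a, 1) * (1, b) by simp, mul_smul, htriv, hcompat]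

variable (htriv : ∀ (b : G₂) (m : M), ((1, b) : G₁ × G₂) • m = m) (hperf : commutator G₂ = ⊤)
include htriv hperf

theorem single_one_mem_range_barD2 (b : G₂) (m : M) :
    Finsupp.single ((1, b) : G₁ × G₂) m ∈ (barD2 (G₁ × G₂) M).range := by
  let q := QuotientAddGroup.mk' (barD2 (G₁ × G₂) M).range
  refine (QuotientAddGroup.eq_zero_iff _).1 <|
    eq_zero_of_commutator_eq_top hperf (fun c => q (Finsupp.single ((1, c) : G₁ × G₂) m))
      (fun c d => ?_) b
  rw [← map_add, eq_comm, QuotientAddGroup.mk'_apply, QuotientAddGroup.mk'_apply,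
    QuotientAddGroup.eq_iff_sub_mem]
  refine ⟨Finsupp.single (((1, c), (1, d)) : (G₁ × G₂) × (G₁ × G₂)) m, ?_⟩
  rw [barD2_single]
  simp only [Prod.inv_mk, inv_one, htriv, Prod.mk_mul_mk, one_mul]
  abel

theorem sub_mapDomain_inl_fst_mem_range_barD2 [DistribMulAction G₁ M]
    (hcompat : ∀ (a : G₁) (m : M), ((a, 1) : G₁ × G₂) • m = a • m) (x : (G₁ × G₂) →₀ M) :
    x - Finsupp.mapDomain (MonoidHom.inl G₁ G₂) (Finsupp.mapDomain (MonoidHom.fst G₁ G₂) x) ∈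
      (barD2 (G₁ × G₂) M).range := by
  induction x using Finsupp.induction_linear with
  | zero => simp
  | add x y hx hy =>
    simpa only [Finsupp.mapDomain_add, add_sub_add_comm] using add_mem hx hy
  | single g m =>
    obtain ⟨a, b⟩ := g
    have hd : Finsupp.single ((a, b) : G₁ × G₂) m - Finsupp.single (a, 1) m =
        Finsupp.single (1, b) (a⁻¹ • m) -
          barD2 (G₁ × G₂) M (Finsupp.single ((a, 1), (1, b)) m) := by
      rw [barD2_single]
      simp only [Prod.inv_mk, inv_one, Prod.mk_mul_mk, one_mul, mul_one, hcompat]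
      abel
    simpa only [Finsupp.mapDomain_single, MonoidHom.coe_fst, MonoidHom.inl_apply, hd]
      using sub_mem (single_one_mem_range_barD2 htriv hperf b _) ⟨_, rfl⟩

theorem cocycle_apply_fst_one {u : G₁ × G₂ → M} (hu : u ∈ cocycles1 (G₁ × G₂) M)
    (g : G₁ × G₂) : u (g.1, 1) = u g := by
  have hvanish : u (1, g.2) = 0 :=
    eq_zero_of_commutator_eq_top hperf (fun b => u (1, b))
      (fun c d => by simpa [htriv] using hu (1, c) (1, d)) g.2
  simpa [hvanish] using (hu (g.1, 1) (1, g.2)).symm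

end Product

/-- If `G = G₁ × G₂`, the factor `G₂` acts trivially on `M`, and `G₂` is perfect
(`H₁(G₂; ℤ) = 0`), then the projection `G → G₁` induces isomorphisms
`H₁(G; M) ≅ H₁(G₁; M)` and `H¹(G; M) ≅ H¹(G₁; M)`. -/
theorem groupH1_coh1_of_product (G₁ G₂ M : Type*) [Group G₁] [Group G₂] [AddCommGroup M]
    [DistribMulAction (G₁ × G₂) M] [DistribMulAction G₁ M]
    (hcompat : ∀ (a : G₁) (m : M), ((a, 1) : G₁ × G₂) • m = a • m)
    (htriv : ∀ (b : G₂) (m : M), ((1, b) : G₁ × G₂) • m = m)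
    (hperf : commutator G₂ = ⊤) :
    Nonempty (GroupH1 (G₁ × G₂) M ≃+ GroupH1 G₁ M) ∧
    Nonempty (GroupCoh1 (G₁ × G₂) M ≃+ GroupCoh1 G₁ M) := by
  have hfst : ∀ (g : G₁ × G₂) (m : M), MonoidHom.fst G₁ G₂ g • m = g • m :=
    fun g m => (mk_smul_eq_smul hcompat htriv g.1 g.2 m).symm
  have hinl : ∀ (a : G₁) (m : M), MonoidHom.inl G₁ G₂ a • m = a • m := hcompat
  constructor
  · refine nonempty_addEquiv_quotient_addSubgroupOf
      (Finsupp.mapDomain.addMonoidHom (MonoidHom.fst G₁ G₂))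
      (Finsupp.mapDomain.addMonoidHom (MonoidHom.inl G₁ G₂))
      (ker_barD1_le_comap_mapDomain _ hfst) (range_barD2_le_comap_mapDomain _ hfst)
      (ker_barD1_le_comap_mapDomain _ hinl) (range_barD2_le_comap_mapDomain _ hinl)
      (fun x _ => sub_mapDomain_inl_fst_mem_range_barD2 htriv hperf hcompat x) fun x _ => ?_
    convert zero_mem (barD2 G₁ M).range
    exact sub_eq_zero.2 <| Finsupp.mapDomain_id.symm.trans <|
      Finsupp.mapDomain_comp (f := MonoidHom.inl G₁ G₂) (g := MonoidHom.fst G₁ G₂)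
  · refine nonempty_addEquiv_quotient_addSubgroupOf
      (LinearMap.funLeft ℤ M (MonoidHom.inl G₁ G₂)).toAddMonoidHom
      (LinearMap.funLeft ℤ M (MonoidHom.fst G₁ G₂)).toAddMonoidHom
      (cocycles1_le_comap_funLeft _ hinl) (coboundaries1_le_comap_funLeft _ hinl)
      (cocycles1_le_comap_funLeft _ hfst) (coboundaries1_le_comap_funLeft _ hfst)
      (fun u hu => ?_) fun u _ => ?_
    · convert zero_mem (coboundaries1 (G₁ × G₂) M)
      exact sub_eq_zero.2 (funext (cocycle_apply_fst_one htriv hperf hu)).symm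
    · exact (sub_self u).symm ▸ zero_mem _
end

section
/- Let G be a group and M a G-module. For M an abelian group write M* = Hom(M, ℚ/ℤ), with G acting on M* by (g·f)(x) = f(g⁻¹·x). Then for every k ≥ 0 there is a natural isomorphism H^k(G; M*) ≅ (H_k(G; M))*. -/
/-! Group homology `H_k(G; M)` and group cohomology `H^k(G; M)` in all degrees, via the
(inhomogeneous) bar resolution, and the duality `H^k(G; M*) ≅ (H_k(G; M))*` with
`M* = Hom(M, ℚ/ℤ)`. -/

/-- `ℚ/ℤ`, with the trivial `G`-action. -/
abbrev QZ := AddCircle (1 : ℚ)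

section Defs

variable (G : Type*) [Group G] (M : Type*) [AddCommGroup M] [DistribMulAction G M]

/-- The `j`-th face map on bar `(n+1)`-tuples: drops the first entry (`j = 0`), multiplies an
adjacent pair (`0 < j < n+1`), or drops the last entry (`j = n+1`). -/
def barFace (n : ℕ) (j : Fin (n + 2)) (gs : Fin (n + 1) → G) : Fin n → G := fun i =>
  if (i : ℕ) + 1 < (j : ℕ) then gs i.castSucc
  else if (i : ℕ) + 1 = (j : ℕ) then gs i.castSucc * gs i.succ
  else gs i.succ

/-- The bar-resolution boundary map on chains,
`d([g₁|⋯|g_{n+1}] ⊗ m) = [g₂|⋯|g_{n+1}] ⊗ (g₁⁻¹ • m) + ∑_{j=1}^{n} (−1)^j [⋯|gⱼg_{j+1}|⋯] ⊗ m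
+ (−1)^{n+1} [g₁|⋯|g_n] ⊗ m`. -/
noncomputable def barChainDAux (n : ℕ) (gs : Fin (n + 1) → G) :
    M →+ ((Fin n → G) →₀ M) :=
  (Finsupp.singleAddHom (barFace G n 0 gs)).comp
      (DistribMulAction.toAddMonoidHom M (gs 0)⁻¹)
    + ∑ j : Fin (n + 1),
        ((-1 : ℤ) ^ ((j : ℕ) + 1)) •
          (Finsupp.singleAddHom (barFace G n j.succ gs) : M →+ ((Fin n → G) →₀ M))

noncomputable def barChainD (n : ℕ) :
    ((Fin (n + 1) → G) →₀ M) →+ ((Fin n → G) →₀ M) :=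
  Finsupp.liftAddHom (barChainDAux G M n)

/-- The `k`-cycles: all of `C₀` in degree `0`, and `ker d_k` in degree `k ≥ 1`. -/
noncomputable def barCycles : (k : ℕ) → AddSubgroup ((Fin k → G) →₀ M)
  | 0 => ⊤
  | (k + 1) => (barChainD G M k).ker

/-- Group homology `H_k(G; M)`, computed from the bar resolution. -/
noncomputable def GroupHomology (k : ℕ) :=
  (barCycles G M k) ⧸ ((barChainD G M k).range.addSubgroupOf (barCycles G M k))

noncomputable instance (k : ℕ) : AddCommGroup (GroupHomology G M k) :=
  QuotientAddGroup.Quotient.addCommGroup _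

/-- The bar-resolution coboundary map on cochains,
`(δf)(g₁,…,g_{n+1}) = g₁ • f(g₂,…,g_{n+1}) + ∑_{j=1}^{n} (−1)^j f(…,gⱼg_{j+1},…)
+ (−1)^{n+1} f(g₁,…,g_n)`. -/
noncomputable def barCochainD (n : ℕ) :
    ((Fin n → G) → M) →+ ((Fin (n + 1) → G) → M) :=
  AddMonoidHom.mk'
    (fun f gs =>
      (gs 0) • f (barFace G n 0 gs)
        + ∑ j : Fin (n + 1),
            ((-1 : ℤ) ^ ((j : ℕ) + 1)) • f (barFace G n j.succ gs))
    (by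
      intro f₁ f₂
      funext gs
      simp only [Pi.add_apply, smul_add, Finset.sum_add_distrib]
      abel)

/-- The `k`-cocycles `ker δ_k`. -/
noncomputable def barCocycles (k : ℕ) : AddSubgroup ((Fin k → G) → M) :=
  (barCochainD G M k).ker

/-- The `k`-coboundaries: `0` in degree `0`, and `im δ_{k-1}` in degree `k ≥ 1`. -/
noncomputable def barCoboundaries : (k : ℕ) → AddSubgroup ((Fin k → G) → M)
  | 0 => ⊥
  | (k + 1) => (barCochainD G M k).range

/-- Group cohomology `H^k(G; M)`, computed from the bar resolution. -/
noncomputable def GroupCohomology (k : ℕ) :=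
  (barCocycles G M k) ⧸ ((barCoboundaries G M k).addSubgroupOf (barCocycles G M k))

noncomputable instance (k : ℕ) : AddCommGroup (GroupCohomology G M k) :=
  QuotientAddGroup.Quotient.addCommGroup _

/-- The contragredient action of `G` on `M* = Hom(M, ℚ/ℤ)`: `(g • f) x = f (g⁻¹ • x)`. -/
instance dualMulAction : MulAction G (M →+ QZ) where
  smul g f := f.comp (DistribMulAction.toAddMonoidHom M g⁻¹)
  one_smul f := by
    show f.comp _ = f
    ext x
    simp [DistribMulAction.toAddMonoidHom]
  mul_smul g h f := by
    show f.comp _ = (f.comp _).comp _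
    ext x
    simp [DistribMulAction.toAddMonoidHom, mul_smul]

instance dualDistribMulAction : DistribMulAction G (M →+ QZ) where
  smul_zero g := rfl
  smul_add g f₁ f₂ := rfl

end Defs

/-! Since `ℚ/ℤ` is divisible, it is an injective abelian group, so `Hom(-, ℚ/ℤ)` is exact.
Under `Hom(C_k ⊗ M, ℚ/ℤ) ≅ Hom(C_k, M*)` the bar coboundary of `M*` is the transpose of the
bar boundary of `M`, hence the cocycles are the functionals vanishing on the boundaries and, by
injectivity, the coboundaries are those vanishing on the cycles. Restricting a cocycle to the
cycles then identifies `H^k(G; M*)` with `Hom(H_k(G; M), ℚ/ℤ)`. -/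

namespace QZ

variable {A B : Type*} [AddCommGroup A] [AddCommGroup B]

theorem exists_comp_eq_of_ker_le (d : B →+ A) (f : B →+ QZ) (h : d.ker ≤ f.ker) :
    ∃ F : A →+ QZ, F.comp d = f := by
  obtain ⟨F, hF⟩ := (Module.Baer.of_divisible QZ).extension_property_addMonoidHom
    (QuotientAddGroup.kerLift d) (QuotientAddGroup.kerLift_injective d)
    (QuotientAddGroup.lift d.ker f h)
  exact ⟨F, AddMonoidHom.ext fun b => DFunLike.congr_fun hF (b : B ⧸ d.ker)⟩

theorem exists_extension_of_subquotient (Z B₁ : AddSubgroup B)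
    (ψ : Z ⧸ B₁.addSubgroupOf Z →+ QZ) :
    ∃ F : B →+ QZ, (∀ b ∈ B₁, F b = 0) ∧ ∀ z : Z, F z = ψ z := by
  obtain ⟨H, hH⟩ := exists_comp_eq_of_ker_le ((QuotientAddGroup.mk' B₁).comp Z.subtype)
    (ψ.comp (QuotientAddGroup.mk' _)) fun z hz => by
      have hz : (z : B) ∈ B₁ := (QuotientAddGroup.eq_zero_iff _).1 hz
      simp [(QuotientAddGroup.eq_zero_iff _).2 (show z ∈ B₁.addSubgroupOf Z from hz)]
  refine ⟨H.comp (QuotientAddGroup.mk' B₁), fun b hb => ?_, DFunLike.congr_fun hH⟩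
  simp [(QuotientAddGroup.eq_zero_iff b).2 hb]

theorem nonempty_subquotient_addEquiv_dual {X : Type*} [AddCommGroup X]
    (e : X ≃+ (B →+ QZ)) (Z B₁ : AddSubgroup B) (K I : AddSubgroup X)
    (hK : ∀ f, f ∈ K ↔ ∀ b ∈ B₁, e f b = 0) (hI : ∀ f, f ∈ I ↔ ∀ z ∈ Z, e f z = 0) :
    Nonempty (K ⧸ I.addSubgroupOf K ≃+ (Z ⧸ B₁.addSubgroupOf Z →+ QZ)) := by
  let Φ : K →+ (Z ⧸ B₁.addSubgroupOf Z →+ QZ) := AddMonoidHom.mk'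
    (fun f => QuotientAddGroup.lift _ ((e f).comp Z.subtype)
      fun z hz => (hK f).1 f.2 z hz)
    fun _ _ => by ext; simp; rfl
  have hΦ : ∀ (f : K) (z : Z), Φ f z = e f z := fun _ _ => rfl
  have hker : Φ.ker = I.addSubgroupOf K := by
    ext f
    rw [AddMonoidHom.mem_ker, AddSubgroup.mem_addSubgroupOf, hI]
    constructor
    · intro h z hz
      simpa [hΦ] using
        DFunLike.congr_fun h (QuotientAddGroup.mk ⟨z, hz⟩ : Z ⧸ B₁.addSubgroupOf Z)
    · intro h
      ext z
      simpa [hΦ] using h z z.2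
  have hsurj : Function.Surjective Φ := by
    intro ψ
    obtain ⟨F, hF₁, hFZ⟩ := exists_extension_of_subquotient Z B₁ ψ
    refine ⟨⟨e.symm F, (hK _).2 (by simpa using hF₁)⟩, ?_⟩
    ext z
    simpa [hΦ] using hFZ z
  exact ⟨(QuotientAddGroup.quotientAddEquivOfEq hker.symm).trans
    (QuotientAddGroup.quotientKerEquivOfSurjective Φ hsurj)⟩

end QZ

section BarDuality

variable (G : Type*) [Group G] (M : Type*) [AddCommGroup M] [DistribMulAction G M]

theorem liftAddHom_barCochainD (n : ℕ) (f : (Fin n → G) → (M →+ QZ)) :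
    Finsupp.liftAddHom (barCochainD G (M →+ QZ) n f)
      = (Finsupp.liftAddHom f).comp (barChainD G M n) := by
  refine Finsupp.addHom_ext fun gs m => ?_
  simp only [Finsupp.liftAddHom_apply_single, AddMonoidHom.comp_apply, barChainD, barChainDAux,
    AddMonoidHom.add_apply, AddMonoidHom.finsetSum_apply, map_add, map_sum, barCochainD,
    AddMonoidHom.mk'_apply]
  congr 1
  · simp only [Finsupp.singleAddHom_apply, Finsupp.liftAddHom_apply_single]
    rfl
  · refine Finset.sum_congr rfl fun j _ => ?_
    simp

theorem mem_barCocycles_dual_iff (k : ℕ) (f : (Fin k → G) → (M →+ QZ)) :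
    f ∈ barCocycles G (M →+ QZ) k ↔
      ∀ b ∈ (barChainD G M k).range, Finsupp.liftAddHom f b = 0 := by
  rw [barCocycles, AddMonoidHom.mem_ker, ← Finsupp.liftAddHom.injective.eq_iff, map_zero,
    liftAddHom_barCochainD]
  constructor
  · rintro h _ ⟨x, rfl⟩
    exact DFunLike.congr_fun h x
  · intro h
    exact AddMonoidHom.ext fun x => h _ ⟨x, rfl⟩

theorem mem_barCoboundaries_dual_iff (k : ℕ) (f : (Fin k → G) → (M →+ QZ)) :
    f ∈ barCoboundaries G (M →+ QZ) k ↔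
      ∀ z ∈ barCycles G M k, Finsupp.liftAddHom f z = 0 := by
  cases k with
  | zero =>
    simp only [barCoboundaries, barCycles, AddSubgroup.mem_bot, AddSubgroup.mem_top,
      forall_const]
    rw [← Finsupp.liftAddHom.injective.eq_iff, map_zero, DFunLike.ext_iff]
    rfl
  | succ k =>
    constructor
    · rintro ⟨g, rfl⟩ z hz
      rw [liftAddHom_barCochainD, AddMonoidHom.comp_apply, AddMonoidHom.mem_ker.1 hz, map_zero]
    · intro h
      obtain ⟨H, hH⟩ := QZ.exists_comp_eq_of_ker_le (barChainD G M k) _ h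
      refine ⟨Finsupp.liftAddHom.symm H, Finsupp.liftAddHom.injective ?_⟩
      rw [liftAddHom_barCochainD, AddEquiv.apply_symm_apply, hH]

end BarDuality

/-- Duality between group homology and group cohomology: for any group `G`, any `G`-module
`M`, and any `k ≥ 0`, `H^k(G; M*) ≅ (H_k(G; M))*` where `M* = Hom(M, ℚ/ℤ)` carries the
contragredient `G`-action. -/
theorem groupCohomology_dual_iso (G : Type*) [Group G] (M : Type*) [AddCommGroup M]
    [DistribMulAction G M] (k : ℕ) :
    Nonempty (GroupCohomology G (M →+ QZ) k ≃+ ((GroupHomology G M k) →+ QZ)) :=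
  QZ.nonempty_subquotient_addEquiv_dual Finsupp.liftAddHom (barCycles G M k)
    (barChainD G M k).range (barCocycles G (M →+ QZ) k) (barCoboundaries G (M →+ QZ) k)
    (mem_barCocycles_dual_iff G M k) (mem_barCoboundaries_dual_iff G M k)
end

section
/- For even L, the subgroup Sp_{2g}(ℤ, L, 2L) is a normal subgroup of Sp_{2g}(ℤ). -/
open Matrix

/-- Membership in Igusa's subgroup `Sp_{2g}(ℤ, L, 2L)`: a symplectic matrix congruent to the
identity mod `L` whose `B` and `C` blocks have all diagonal entries divisible by `2L`. -/
def InSpL2L (g L : ℕ) (X : Matrix (Idx g) (Idx g) ℤ) : Prop :=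
  IsSymp g ℤ X ∧ IsLevel g L X ∧
    ∀ i : Fin g, ((2 * L : ℤ) ∣ X (Sum.inl i) (Sum.inr i)) ∧
      ((2 * L : ℤ) ∣ X (Sum.inr i) (Sum.inl i))

/-! For even `L`, an integer matrix `X ≡ 1 mod L` satisfies `X² ≡ 1 mod 2L`, and two such matrices
satisfy `XY ≡ X + Y - 1 mod 2L`, because `(X - 1)(Y - 1) ≡ 0 mod L²` and `2L ∣ L²`. The conditions on the
diagonals of the blocks `B` and `C` say exactly that the diagonal of `ΩX` vanishes mod `2L`.
For symplectic `X` of level `L` we get `(ΩX)ᵀ = -XᵀΩ = -ΩX⁻¹ ≡ -ΩX mod 2L`, so `ΩX` is alternating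
mod `2L`. Conjugating `X` by a symplectic `Y` replaces `ΩX` by the congruent matrix
`Y⁻ᵀ (ΩX) Y⁻¹`, and congruence preserves alternating matrices. -/

namespace Matrix

variable {m n R : Type*} [Fintype n] [CommRing R]

theorem dotProduct_mulVec_self_eq_zero {S : Matrix n n R} (hS : Sᵀ = -S) (hdiag : S.diag = 0)
    (v : n → R) : v ⬝ᵥ S *ᵥ v = 0 := by
  simp only [dotProduct, mulVec, Finset.mul_sum]
  rw [← Fintype.sum_prod_type']
  refine Finset.sum_ninvolution Prod.swap (fun ⟨a, b⟩ => ?_) (fun ⟨a, b⟩ hne hab => hne ?_)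
    (by simp) (by simp)
  · have hskew : S b a = -S a b := congrFun (congrFun hS a) b
    simp only [Prod.swap, hskew]
    ring
  · obtain rfl : b = a := congrArg Prod.fst hab
    rw [show S b b = 0 from congrFun hdiag b, zero_mul, mul_zero]

theorem diag_transpose_mul_mul_eq_zero {S : Matrix n n R} (hS : Sᵀ = -S) (hdiag : S.diag = 0)
    (P : Matrix n m R) : (Pᵀ * S * P).diag = 0 := by
  ext p
  simpa [Matrix.mul_assoc, mul_apply, dotProduct, mulVec, Finset.mul_sum, mul_assoc]
    using dotProduct_mulVec_self_eq_zero hS hdiag (fun i => P i p)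

end Matrix

section Omega

variable (g : ℕ) (R : Type*) [CommRing R]

theorem omega_eq_neg_J : Omega g R = -J (Fin g) R := by
  simp [Omega, J, fromBlocks_neg]

theorem omega_transpose : (Omega g R)ᵀ = -Omega g R := by
  rw [omega_eq_neg_J, transpose_neg, J_transpose]

variable {g R}

theorem omega_mul_apply_inl (X : Matrix (Idx g) (Idx g) R) (i : Fin g) (q : Idx g) :
    (Omega g R * X) (Sum.inl i) q = X (Sum.inr i) q := by
  simp [Omega, mul_apply, Fintype.sum_sum_type, one_apply]

theorem omega_mul_apply_inr (X : Matrix (Idx g) (Idx g) R) (i : Fin g) (q : Idx g) :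
    (Omega g R * X) (Sum.inr i) q = -X (Sum.inl i) q := by
  simp [Omega, mul_apply, Fintype.sum_sum_type, one_apply]

end Omega

section Symplectic

variable {g : ℕ} {R : Type*} [CommRing R] {X Y : Matrix (Idx g) (Idx g) R}

theorem isSymp_iff_mem_symplecticGroup : IsSymp g R X ↔ X ∈ symplecticGroup (Fin g) R := by
  rw [SymplecticGroup.mem_iff', IsSymp, omega_eq_neg_J, Matrix.mul_neg, Matrix.neg_mul, neg_inj]

namespace IsSymp

theorem one : IsSymp g R 1 :=
  isSymp_iff_mem_symplecticGroup.mpr (one_mem _)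

theorem mul (hX : IsSymp g R X) (hY : IsSymp g R Y) : IsSymp g R (X * Y) :=
  isSymp_iff_mem_symplecticGroup.mpr <|
    mul_mem (isSymp_iff_mem_symplecticGroup.mp hX) (isSymp_iff_mem_symplecticGroup.mp hY)

theorem isUnit_det (hX : IsSymp g R X) : IsUnit X.det :=
  SymplecticGroup.symplectic_det (isSymp_iff_mem_symplecticGroup.mp hX)

theorem inv (hX : IsSymp g R X) : IsSymp g R X⁻¹ := by
  rw [isSymp_iff_mem_symplecticGroup,
    ← SymplecticGroup.coe_inv' ⟨X, isSymp_iff_mem_symplecticGroup.mp hX⟩]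
  exact Subtype.prop _

theorem transpose_mul_omega (hX : IsSymp g R X) : Xᵀ * Omega g R = Omega g R * X⁻¹ :=
  calc Xᵀ * Omega g R = Xᵀ * Omega g R * X * X⁻¹ :=
        (mul_nonsing_inv_cancel_right X _ hX.isUnit_det).symm
    _ = Omega g R * X⁻¹ := by rw [hX]

theorem omega_mul (hX : IsSymp g R X) : Omega g R * X = (X⁻¹)ᵀ * Omega g R := by
  rw [hX.inv.transpose_mul_omega, nonsing_inv_nonsing_inv _ hX.isUnit_det]

end IsSymp

end Symplectic

section Reduction

variable {n : Type*} [Fintype n] [DecidableEq n]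

abbrev reduceMod (m : ℕ) : Matrix n n ℤ →+* Matrix n n (ZMod m) :=
  (Int.castRingHom (ZMod m)).mapMatrix

theorem reduceMod_eq_zero_iff {m : ℕ} {A : Matrix n n ℤ} :
    reduceMod m A = 0 ↔ ∀ p q, (m : ℤ) ∣ A p q := by
  simp only [← Matrix.ext_iff, RingHom.mapMatrix_apply, map_apply, Matrix.zero_apply, eq_intCast,
    ZMod.intCast_zmod_eq_zero_iff_dvd]

theorem reduceMod_transpose (m : ℕ) (A : Matrix n n ℤ) : reduceMod m Aᵀ = (reduceMod m A)ᵀ :=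
  transpose_map.symm

end Reduction

section Level

variable {g L : ℕ} {X Y : Matrix (Idx g) (Idx g) ℤ}

theorem isLevel_iff : IsLevel g L X ↔ reduceMod L X = 1 := Iff.rfl

namespace IsLevel

theorem dvd_sub_one (hX : IsLevel g L X) (p q : Idx g) : (L : ℤ) ∣ (X - 1) p q :=
  reduceMod_eq_zero_iff.mp (by rw [map_sub, map_one, sub_eq_zero, ← isLevel_iff]; exact hX) p q

theorem mul (hX : IsLevel g L X) (hY : IsLevel g L Y) : IsLevel g L (X * Y) := by
  rw [isLevel_iff] at *
  rw [map_mul, hX, hY, mul_one]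

theorem inv (hX : IsLevel g L X) (hdet : IsUnit X.det) : IsLevel g L X⁻¹ := by
  rw [isLevel_iff] at hX ⊢
  rw [← map_one (reduceMod L), ← nonsing_inv_mul _ hdet, map_mul, hX, mul_one]

theorem conj (hX : IsLevel g L X) (hdet : IsUnit Y.det) : IsLevel g L (Y * X * Y⁻¹) := by
  rw [isLevel_iff] at hX ⊢
  rw [map_mul, map_mul, hX, mul_one, ← map_mul, mul_nonsing_inv _ hdet, map_one]

theorem reduceMod_sub_one_mul_sub_one (hL : 2 ∣ L) (hX : IsLevel g L X)
    (hY : IsLevel g L Y) : reduceMod (2 * L) ((X - 1) * (Y - 1)) = 0 := by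
  obtain ⟨l, rfl⟩ := hL
  refine reduceMod_eq_zero_iff.mpr fun p q => ?_
  refine mul_apply (M := X - 1) ▸ Finset.dvd_sum fun k _ => ?_
  refine dvd_trans ⟨l, ?_⟩ (mul_dvd_mul (hX.dvd_sub_one p k) (hY.dvd_sub_one k q))
  push_cast
  ring

theorem reduceMod_mul (hL : 2 ∣ L) (hX : IsLevel g L X) (hY : IsLevel g L Y) :
    reduceMod (2 * L) (X * Y) = reduceMod (2 * L) X + reduceMod (2 * L) Y - 1 := by
  have hXY : X * Y = (X - 1) * (Y - 1) + X + Y - 1 := by noncomm_ring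
  rw [hXY, map_sub, map_add, map_add, reduceMod_sub_one_mul_sub_one hL hX hY, zero_add, map_one]

theorem reduceMod_mul_self (hL : 2 ∣ L) (hX : IsLevel g L X) :
    reduceMod (2 * L) (X * X) = 1 := by
  have htwo : reduceMod (2 * L) (2 • (X - 1)) = 0 := reduceMod_eq_zero_iff.mpr fun p q => by
    simpa using mul_dvd_mul_left 2 (hX.dvd_sub_one p q)
  rw [map_nsmul, map_sub, map_one] at htwo
  rw [hX.reduceMod_mul hL hX, ← sub_eq_zero, ← htwo]
  abel

theorem reduceMod_inv (hL : 2 ∣ L) (hX : IsLevel g L X) (hdet : IsUnit X.det) :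
    reduceMod (2 * L) X⁻¹ = reduceMod (2 * L) X := by
  rw [← mul_one (reduceMod (2 * L) X⁻¹), ← hX.reduceMod_mul_self hL, ← map_mul,
    ← Matrix.mul_assoc, nonsing_inv_mul _ hdet, Matrix.one_mul]

end IsLevel

theorem IsSymp.transpose_reduceMod_omega_mul (hL : 2 ∣ L) (hXs : IsSymp g ℤ X)
    (hX : IsLevel g L X) :
    (reduceMod (2 * L) (Omega g ℤ * X))ᵀ = -reduceMod (2 * L) (Omega g ℤ * X) := by
  rw [← reduceMod_transpose, transpose_mul, omega_transpose, Matrix.mul_neg, map_neg,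
    hXs.transpose_mul_omega, map_mul, map_mul, hX.reduceMod_inv hL hXs.isUnit_det]

theorem inSpL2L_iff :
    InSpL2L g L X ↔
      IsSymp g ℤ X ∧ IsLevel g L X ∧ (reduceMod (2 * L) (Omega g ℤ * X)).diag = 0 := by
  simp only [InSpL2L, funext_iff, Sum.forall, diag_apply, RingHom.mapMatrix_apply, map_apply,
    Pi.zero_apply, eq_intCast, ZMod.intCast_zmod_eq_zero_iff_dvd, omega_mul_apply_inl,
    omega_mul_apply_inr, dvd_neg, Nat.cast_mul, Nat.cast_ofNat, ← forall_and]
  exact and_congr_right' (and_congr_right' (forall_congr' fun _ => and_comm))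

end Level

theorem spL2L_normal_general (g L : ℕ) (heven : 2 ∣ L) :
    InSpL2L g L 1 ∧
    (∀ X Y : Matrix (Idx g) (Idx g) ℤ, InSpL2L g L X → InSpL2L g L Y →
      InSpL2L g L (X * Y)) ∧
    (∀ X : Matrix (Idx g) (Idx g) ℤ, InSpL2L g L X → InSpL2L g L X⁻¹) ∧
    (∀ X Y : Matrix (Idx g) (Idx g) ℤ, InSpL2L g L X → IsSymp g ℤ Y →
      InSpL2L g L (Y * X * Y⁻¹)) := by
  have hΩ : (reduceMod (2 * L) (Omega g ℤ)).diag = 0 := by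
    ext (i | i) <;> simp [Omega]
  simp only [inSpL2L_iff]
  refine ⟨⟨IsSymp.one, isLevel_iff.mpr (map_one _), by rwa [Matrix.mul_one]⟩, ?_, ?_, ?_⟩
  · rintro X Y ⟨hXs, hX, hXd⟩ ⟨hYs, hY, hYd⟩
    refine ⟨hXs.mul hYs, hX.mul hY, ?_⟩
    rw [map_mul, hX.reduceMod_mul heven hY, mul_sub, mul_add, mul_one, ← map_mul, ← map_mul,
      diag_sub, diag_add, hXd, hYd, hΩ, add_zero, sub_zero]
  · rintro X ⟨hXs, hX, hXd⟩
    refine ⟨hXs.inv, hX.inv hXs.isUnit_det, ?_⟩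
    rwa [map_mul, hX.reduceMod_inv heven hXs.isUnit_det, ← map_mul]
  · rintro X Y ⟨hXs, hX, hXd⟩ hYs
    refine ⟨(hYs.mul hXs).mul hYs.inv, hX.conj hYs.isUnit_det, ?_⟩
    have hconj : Omega g ℤ * (Y * X * Y⁻¹) = (Y⁻¹)ᵀ * (Omega g ℤ * X) * Y⁻¹ := by
      rw [← Matrix.mul_assoc, ← Matrix.mul_assoc, hYs.omega_mul, Matrix.mul_assoc _ _ X]
    rw [hconj, map_mul, map_mul, reduceMod_transpose]
    exact diag_transpose_mul_mul_eq_zero (hXs.transpose_reduceMod_omega_mul heven hX) hXd _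

/-- For even `L`, `Sp_{2g}(ℤ, L, 2L)` is a normal subgroup of `Sp_{2g}(ℤ)`: it contains the
identity, is closed under products and inverses, and is stable under conjugation by
arbitrary elements of `Sp_{2g}(ℤ)`. -/
theorem spL2L_normal (g L : ℕ) (hL : 2 ≤ L) (heven : 2 ∣ L) :
    InSpL2L g L 1 ∧
    (∀ X Y : Matrix (Idx g) (Idx g) ℤ, InSpL2L g L X → InSpL2L g L Y →
      InSpL2L g L (X * Y)) ∧
    (∀ X : Matrix (Idx g) (Idx g) ℤ, InSpL2L g L X → InSpL2L g L X⁻¹) ∧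
    (∀ X Y : Matrix (Idx g) (Idx g) ℤ, InSpL2L g L X → IsSymp g ℤ Y →
      InSpL2L g L (Y * X * Y⁻¹)) :=
  spL2L_normal_general g L heven
end

section
/- Let Ω be the set of ℤ/2-quadratic forms on a 2g-dimensional symplectic ℤ/2-vector space V, i.e., functions f: V → ℤ/2 with f(x+y) = f(x) + f(y) + i(x,y) for all x, y, where i is the symplectic pairing. Fix a symplectic basis a₁, b₁, …, a_g, b_g of V. Then the Arf invariant Arf(f) = Σᵢ f(aᵢ)f(bᵢ) is independent of the choice of symplectic basis. -/
/-- `V = (ℤ/2)^{2g}`. -/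
abbrev V2 (g : ℕ) := Idx g → ZMod 2

/-- The standard symplectic pairing on `(ℤ/2)^{2g}`. -/
def pairing (g : ℕ) (x y : V2 g) : ZMod 2 :=
  ∑ j : Fin g, (x (Sum.inl j) * y (Sum.inr j) + x (Sum.inr j) * y (Sum.inl j))

/-- `f` is a quadratic refinement of the pairing: `f(x+y) = f(x) + f(y) + i(x,y)`. -/
def IsQuadraticForm (g : ℕ) (f : V2 g → ZMod 2) : Prop :=
  ∀ x y : V2 g, f (x + y) = f x + f y + pairing g x y

/-- `(a, b)` is a symplectic basis of `V`: it satisfies the symplectic pairing conditions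
and spans `V`. -/
def IsSymplecticBasis (g : ℕ) (a b : Fin g → V2 g) : Prop :=
  (∀ j l, pairing g (a j) (b l) = if j = l then 1 else 0) ∧
  (∀ j l, pairing g (a j) (a l) = 0) ∧
  (∀ j l, pairing g (b j) (b l) = 0) ∧
  Submodule.span (ZMod 2) (Set.range a ∪ Set.range b) = ⊤

lemma AddChar.map_sum_eq_prod {ι A M : Type*} [AddCommMonoid A] [CommMonoid M]
    (ψ : AddChar A M) (s : Finset ι) (f : ι → A) : ψ (∑ i ∈ s, f i) = ∏ i ∈ s, ψ (f i) := by
  induction s using Finset.cons_induction with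
  | empty => simp
  | cons i s hi ih => rw [Finset.sum_cons, Finset.prod_cons, ψ.map_add_eq_mul, ih]

lemma Fintype.sum_prod_sum_elim {ι α R : Type*} [Fintype ι] [DecidableEq ι] [Fintype α]
    [CommSemiring R] (h : ι → α → α → R) :
    ∑ w : ι ⊕ ι → α, ∏ j, h j (w (.inl j)) (w (.inr j)) = ∏ j, ∑ x, ∑ y, h j x y := by
  rw [← (Equiv.sumArrowEquivProdArrow ι ι α).symm.sum_comp, Fintype.sum_prod_type,
    Fintype.prod_sum]
  exact Fintype.sum_congr _ _ fun u => (Fintype.prod_sum fun j y => h j (u j) y).symm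

lemma Fintype.bijective_linearCombination_of_span_eq_top {K ι : Type*} [Field K] [Fintype ι]
    {v : ι → ι → K} (hv : Submodule.span K (Set.range v) = ⊤) :
    Function.Bijective (Fintype.linearCombination K v) := by
  have hsurj : Function.Surjective (Fintype.linearCombination K v) := by
    rw [← LinearMap.range_eq_top, Fintype.range_linearCombination, hv]
  exact ⟨LinearMap.injective_iff_surjective.mpr hsurj, hsurj⟩

def signChar : AddChar (ZMod 2) ℤ where
  toFun x := 1 - 2 * x.val
  map_zero_eq_one' := rfl
  map_add_eq_mul' := by decide

lemma signChar_injective : Function.Injective signChar := by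
  intro x y
  revert x y
  decide

/-- The Gauss sum of a hyperbolic plane `⟨a, b⟩` with `f(a) = α`, `f(b) = β`. -/
lemma sum_signChar_hyperbolic (α β : ZMod 2) :
    ∑ c : ZMod 2, ∑ d : ZMod 2, signChar (c * α + d * β + c * d) = 2 * signChar (α * β) := by
  revert α β
  decide

section Pairing

variable {g : ℕ}

lemma pairing_comm (x y : V2 g) : pairing g x y = pairing g y x :=
  Finset.sum_congr rfl fun _ _ => by ring

lemma pairing_add_left (x y z : V2 g) :
    pairing g (x + y) z = pairing g x z + pairing g y z := by
  simp only [pairing, Pi.add_apply, ← Finset.sum_add_distrib]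
  exact Finset.sum_congr rfl fun _ _ => by ring

lemma pairing_smul_left (c : ZMod 2) (x y : V2 g) :
    pairing g (c • x) y = c * pairing g x y := by
  simp only [pairing, Pi.smul_apply, smul_eq_mul, Finset.mul_sum]
  exact Finset.sum_congr rfl fun _ _ => by ring

lemma pairing_add_right (x y z : V2 g) :
    pairing g x (y + z) = pairing g x y + pairing g x z := by
  rw [pairing_comm, pairing_add_left, pairing_comm y, pairing_comm z]

lemma pairing_smul_right (c : ZMod 2) (x y : V2 g) :
    pairing g x (c • y) = c * pairing g x y := by
  rw [pairing_comm, pairing_smul_left, pairing_comm]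

lemma pairing_sum_right {ι : Type*} (x : V2 g) (s : Finset ι) (y : ι → V2 g) :
    pairing g x (∑ i ∈ s, y i) = ∑ i ∈ s, pairing g x (y i) := by
  induction s using Finset.cons_induction with
  | empty => simp [pairing]
  | cons i s hi ih => rw [Finset.sum_cons, Finset.sum_cons, pairing_add_right, ih]

lemma IsSymplecticBasis.pairing_eq_zero_of_ne {a b : Fin g → V2 g} (hab : IsSymplecticBasis g a b)
    {j l : Fin g} (hjl : j ≠ l) (c d c' d' : ZMod 2) :
    pairing g (c • a j + d • b j) (c' • a l + d' • b l) = 0 := by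
  obtain ⟨hab, haa, hbb, -⟩ := hab
  have hba : pairing g (b j) (a l) = 0 := by rw [pairing_comm, hab, if_neg hjl.symm]
  simp [pairing_add_left, pairing_add_right, pairing_smul_left, pairing_smul_right,
    haa, hbb, hab, hba, hjl]

end Pairing

namespace IsQuadraticForm

variable {g : ℕ} {f : V2 g → ZMod 2}

lemma map_zero (hf : IsQuadraticForm g f) : f 0 = 0 := by
  have h := hf 0 0
  simp only [add_zero, pairing, Pi.zero_apply, zero_mul, Finset.sum_const_zero] at h
  linear_combination -h

lemma map_smul (hf : IsQuadraticForm g f) (c : ZMod 2) (x : V2 g) : f (c • x) = c * f x := by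
  obtain rfl | rfl : c = 0 ∨ c = 1 := by revert c; decide
  · rw [zero_smul, zero_mul, hf.map_zero]
  · rw [one_smul, one_mul]

lemma map_smul_add_smul (hf : IsQuadraticForm g f) (c d : ZMod 2) (x y : V2 g) :
    f (c • x + d • y) = c * f x + d * f y + c * d * pairing g x y := by
  rw [hf, hf.map_smul, hf.map_smul, pairing_smul_left, pairing_smul_right]
  ring

lemma map_sum_of_pairwise_orthogonal (hf : IsQuadraticForm g f) {ι : Type*} (s : Finset ι)
    (x : ι → V2 g) (hx : ∀ i ∈ s, ∀ j ∈ s, i ≠ j → pairing g (x i) (x j) = 0) :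
    f (∑ i ∈ s, x i) = ∑ i ∈ s, f (x i) := by
  induction s using Finset.cons_induction with
  | empty => simpa using hf.map_zero
  | cons i s hi ih =>
    have horth : pairing g (x i) (∑ j ∈ s, x j) = 0 := by
      rw [pairing_sum_right]
      exact Finset.sum_eq_zero fun j hj =>
        hx i (s.mem_cons_self i) j (Finset.mem_cons_of_mem hj) (ne_of_mem_of_not_mem hj hi).symm
    rw [Finset.sum_cons, Finset.sum_cons, hf, horth, add_zero,
      ih fun k hk l hl => hx k (Finset.mem_cons_of_mem hk) l (Finset.mem_cons_of_mem hl)]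

lemma map_sum_symplecticBasis (hf : IsQuadraticForm g f) {a b : Fin g → V2 g}
    (hab : IsSymplecticBasis g a b) (c d : Fin g → ZMod 2) :
    f (∑ j, (c j • a j + d j • b j)) = ∑ j, (c j * f (a j) + d j * f (b j) + c j * d j) := by
  rw [hf.map_sum_of_pairwise_orthogonal _ _
    fun j _ l _ hjl => hab.pairing_eq_zero_of_ne hjl _ _ _ _]
  refine Finset.sum_congr rfl fun j _ => ?_
  rw [hf.map_smul_add_smul, hab.1 j j, if_pos rfl, mul_one]

lemma sum_signChar_eq (hf : IsQuadraticForm g f) {a b : Fin g → V2 g}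
    (hab : IsSymplecticBasis g a b) :
    ∑ x, signChar (f x) = 2 ^ g * signChar (∑ j, f (a j) * f (b j)) := by
  have hcoord : Function.Bijective (Fintype.linearCombination (ZMod 2) (Sum.elim a b)) :=
    Fintype.bijective_linearCombination_of_span_eq_top
      (by rw [Set.Sum.elim_range]; exact hab.2.2.2)
  rw [← hcoord.sum_comp]
  calc ∑ w : Idx g → ZMod 2, signChar (f (Fintype.linearCombination (ZMod 2) (Sum.elim a b) w))
      = ∑ w : Idx g → ZMod 2, ∏ j, signChar (w (.inl j) * f (a j) + w (.inr j) * f (b j)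
          + w (.inl j) * w (.inr j)) := by
        refine Fintype.sum_congr _ _ fun w => ?_
        rw [Fintype.linearCombination_apply, Fintype.sum_sum_type, ← Finset.sum_add_distrib]
        simp only [Sum.elim_inl, Sum.elim_inr]
        rw [hf.map_sum_symplecticBasis hab, AddChar.map_sum_eq_prod]
    _ = ∏ j, ∑ c, ∑ d, signChar (c * f (a j) + d * f (b j) + c * d) :=
        Fintype.sum_prod_sum_elim fun j c d => signChar (c * f (a j) + d * f (b j) + c * d)
    _ = 2 ^ g * signChar (∑ j, f (a j) * f (b j)) := by
        simp only [sum_signChar_hyperbolic, Finset.prod_mul_distrib, Finset.prod_const,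
          Finset.card_univ, Fintype.card_fin, AddChar.map_sum_eq_prod]

end IsQuadraticForm

/-- The Arf invariant `Arf(f) = Σⱼ f(aⱼ) f(bⱼ)` of a quadratic refinement `f` of the
symplectic pairing does not depend on the choice of symplectic basis. -/
theorem arf_invariant_well_defined (g : ℕ) (f : V2 g → ZMod 2)
    (hf : IsQuadraticForm g f)
    (a b a' b' : Fin g → V2 g)
    (hab : IsSymplecticBasis g a b) (hab' : IsSymplecticBasis g a' b') :
    ∑ j : Fin g, f (a j) * f (b j) = ∑ j : Fin g, f (a' j) * f (b' j) := by
  refine signChar_injective (mul_left_cancel₀ (pow_ne_zero g two_ne_zero : (2 : ℤ) ^ g ≠ 0) ?_)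
  rw [← hf.sum_signChar_eq hab, ← hf.sum_signChar_eq hab']
end
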